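/- arXiv:1107.1864 — 4 statements merged into one kernel-verified Lean document; each statement's English description precedes it below -/
import Mathlib

section
/- Let 𝔤 be a finite-dimensional complex reductive Lie algebra (i.e., the radical of 𝔤 equals its centre), let ρ : 𝔤 → gl(W) be a faithful finite-dimensional representation, and let B(x,y) = tr(ρ(x)ρ(y)) be the associated trace form; assume B is nondegenerate. Let h be a nonzero element of the derived algebra [𝔤,𝔤] such that ad h is diagonalizable with integer eigenvalues, let 𝔤_i = {ξ ∈ 𝔤 : [h,ξ] = i·ξ} be the associated ℤ-grading, and let 𝔤̃_0 = {ξ ∈ 𝔤_0 : B(h,ξ) = 0}. Then for every x ∈ 𝔤_1, the subspaces [𝔤̃_0,x] and [𝔤_0,x] are different if and only if 2h is a Dynkin characteristic of x, i.e., there exists y ∈ 𝔤_{−1} such that (2h, x, y) is an sl₂-triple. (This is the infinitesimal form of Theorem 2.9 of the paper; by Lemma 2.7 of the paper the tangent-space inequality [𝔤̃_0,x] ≠ [𝔤_0,x] is equivalent to the orbit inequality G̃_0x ≠ G_0x.) -/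
/-- An `sl₂`-triple `(H, E, F)` in a complex Lie algebra:
`[H,E] = 2E`, `[H,F] = -2F`, `[E,F] = H`. -/
def IsSl2Triple' {L : Type*} [LieRing L] [LieAlgebra ℂ L] (H E F : L) : Prop :=
  ⁅H, E⁆ = (2 : ℂ) • E ∧ ⁅H, F⁆ = (-2 : ℂ) • F ∧ ⁅E, F⁆ = H

/-- For a subspace `S` of a Lie algebra and an element `x`, `[S, x]` is the linear span of
all brackets `⁅ξ, x⁆` with `ξ ∈ S`. -/
def bracketSpan {L : Type*} [LieRing L] [LieAlgebra ℂ L] (S : Submodule ℂ L) (x : L) :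
    Submodule ℂ L :=
  Submodule.span ℂ {z | ∃ ξ ∈ S, z = ⁅ξ, x⁆}

attribute [local instance 100] LieRing.ofAssociativeRing

/-- Theorem 2.9 (infinitesimal form): for a finite-dimensional complex reductive Lie algebra `𝔤`
with nondegenerate trace form `B` of a faithful representation `ρ`, a nonzero `h ∈ [𝔤,𝔤]` with
`ad h` diagonalizable with integer eigenvalues, and `x ∈ 𝔤₁`:
`[𝔤̃₀, x] ≠ [𝔤₀, x]` if and only if `2h` is a Dynkin characteristic of `x`. -/
theorem stmt0 {g : Type*} [LieRing g] [LieAlgebra ℂ g] [Module.Finite ℂ g]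
    -- `g` is reductive: its radical equals its centre
    (hred : LieAlgebra.radical ℂ g = LieAlgebra.center ℂ g)
    -- `ρ` is a faithful finite-dimensional representation of `g`
    {W : Type*} [AddCommGroup W] [Module ℂ W] [Module.Finite ℂ W]
    (ρ : g →ₗ⁅ℂ⁆ Module.End ℂ W) (hρ : Function.Injective ρ)
    -- `B` is the associated trace form, assumed nondegenerate
    (B : LinearMap.BilinForm ℂ g)
    (hB : ∀ x y, B x y = LinearMap.trace ℂ W (ρ x * ρ y))
    (hnd : ∀ x, (∀ y, B x y = 0) → x = 0)
    -- `h` is a nonzero element of the derived algebra `[𝔤,𝔤]`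
    (h : g) (hh : h ≠ 0) (hder : h ∈ LieAlgebra.derivedSeries ℂ g 1)
    -- `gr i` is the `i`-eigenspace of `ad h`; `ad h` is diagonalizable with integer eigenvalues
    (gr : ℤ → Submodule ℂ g)
    (hgr : ∀ i : ℤ, gr i = Module.End.eigenspace (LieAlgebra.ad ℂ g h) (i : ℂ))
    (hdiag : ⨆ i : ℤ, gr i = ⊤)
    -- `g0t` is the orthogonal complement of `h` in `𝔤₀`
    (g0t : Submodule ℂ g)
    (hg0t : ∀ ξ, ξ ∈ g0t ↔ ξ ∈ gr 0 ∧ B h ξ = 0)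
    (x : g) (hx : x ∈ gr 1) :
    bracketSpan g0t x ≠ bracketSpan (gr 0) x ↔
      ∃ y ∈ gr (-1), IsSl2Triple' ((2 : ℂ) • h) x y := by
  classical
  -- symmetry of B
  have Bsymm : ∀ a b, B a b = B b a := fun a b => by
    rw [hB, hB, LinearMap.trace_mul_comm]
  -- invariance of B
  have Binv : ∀ a b c, B ⁅a, b⁆ c = B a ⁅b, c⁆ := by
    intro a b c
    have h1 : ρ ⁅a, b⁆ = ρ a * ρ b - ρ b * ρ a := by
      rw [LieHom.map_lie]; rfl
    have h2 : ρ ⁅b, c⁆ = ρ b * ρ c - ρ c * ρ b := by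
      rw [LieHom.map_lie]; rfl
    rw [hB, hB, h1, h2, sub_mul, mul_sub, map_sub, map_sub, mul_assoc,
      mul_assoc, LinearMap.trace_mul_comm ℂ (ρ b) (ρ a * ρ c), mul_assoc]
  -- eigenspace membership
  have mem_gr : ∀ (i : ℤ) (ξ : g), ξ ∈ gr i ↔ ⁅h, ξ⁆ = (i : ℂ) • ξ := fun i ξ => by
    rw [hgr, Module.End.mem_eigenspace_iff, LieAlgebra.ad_apply]
  have hgr0h : h ∈ gr 0 := by
    rw [mem_gr]; simp
  -- brackets add degrees
  have gr_bracket : ∀ (i j : ℤ) (ξ η : g), ξ ∈ gr i → η ∈ gr j → ⁅ξ, η⁆ ∈ gr (i + j) := by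
    intro i j ξ η hξ hη
    rw [mem_gr] at hξ hη ⊢
    rw [leibniz_lie, hξ, hη, smul_lie, lie_smul, Int.cast_add, add_smul]
  -- orthogonality of distinct-degree pieces
  have orth : ∀ (i j : ℤ), i + j ≠ 0 → ∀ ξ ∈ gr i, ∀ η ∈ gr j, B ξ η = 0 := by
    intro i j hij ξ hξ η hη
    have e1 : B ⁅h, ξ⁆ η = (i : ℂ) * B ξ η := by
      rw [(mem_gr i ξ).mp hξ, map_smul]; rfl
    have e2 : B ξ ⁅h, η⁆ = (j : ℂ) * B ξ η := by
      rw [(mem_gr j η).mp hη, map_smul, smul_eq_mul]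
    have key : ((i : ℂ) + j) * B ξ η = 0 := by
      have h4 : ⁅ξ, h⁆ = -⁅h, ξ⁆ := by rw [← lie_skew]
      have e3 := Binv ξ h η
      rw [h4, map_neg, LinearMap.neg_apply, e1, e2] at e3
      linear_combination -e3
    have hne : ((i : ℂ) + j) ≠ 0 := by
      rw [← Int.cast_add]
      exact_mod_cast hij
    exact (mul_eq_zero.mp key).resolve_left hne
  -- vanishing on all graded pieces implies zero functional
  have sup_vanish : ∀ (f : g →ₗ[ℂ] ℂ), (∀ i : ℤ, gr i ≤ LinearMap.ker f) → ∀ v, f v = 0 := by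
    intro f hf v
    have : (⊤ : Submodule ℂ g) ≤ LinearMap.ker f := by
      rw [← hdiag]; exact iSup_le hf
    exact LinearMap.mem_ker.mp (this Submodule.mem_top)
  have hBh0 : ∀ (i : ℤ), i ≠ 0 → ∀ ξ ∈ gr i, B h ξ = 0 := fun i hi ξ hξ =>
    orth 0 i (by simpa using hi) h hgr0h ξ hξ
  -- nondegeneracy of the pairing gr i × gr (-i)
  have nd_gr : ∀ (i : ℤ) (t : g), t ∈ gr i → (∀ ξ ∈ gr (-i), B ξ t = 0) → t = 0 := by
    intro i t ht hperp
    apply hnd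
    intro y
    rw [Bsymm]
    refine sup_vanish (B.flip t) (fun j ξ hξ => ?_) y
    rw [LinearMap.mem_ker]
    show B ξ t = 0
    by_cases hji : j = -i
    · exact hperp ξ (hji ▸ hξ)
    · exact orth j i (fun hc => hji (by omega)) ξ hξ t ht
  -- existence of ξ₁ ∈ gr 0 with B h ξ₁ = 1
  obtain ⟨ξ₁, hξ₁0, hξ₁1⟩ : ∃ ξ₁ ∈ gr 0, B h ξ₁ = 1 := by
    have : ¬ ∀ ξ ∈ gr 0, B h ξ = 0 := by
      intro hall
      apply hh
      apply hnd
      refine sup_vanish (B h) (fun i ξ hξ => ?_)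
      rw [LinearMap.mem_ker]
      by_cases hi : i = 0
      · exact hall ξ (hi ▸ hξ)
      · exact hBh0 i hi ξ hξ
    push_neg at this
    obtain ⟨ξ, hξ, hBξ⟩ := this
    exact ⟨(B h ξ)⁻¹ • ξ, Submodule.smul_mem _ _ hξ, by
      rw [map_smul, smul_eq_mul, inv_mul_cancel₀ hBξ]⟩
  have hg0t_le : g0t ≤ gr 0 := fun ξ hξ => ((hg0t ξ).mp hξ).1
  have span_le_gr1 : ∀ S : Submodule ℂ g, S ≤ gr 0 → bracketSpan S x ≤ gr 1 := by
    intro S hS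
    apply Submodule.span_le.mpr
    rintro z ⟨ξ, hξ, rfl⟩
    simpa using gr_bracket 0 1 ξ x (hS hξ) hx
  have small_le_big : bracketSpan g0t x ≤ bracketSpan (gr 0) x := by
    apply Submodule.span_mono
    rintro z ⟨ξ, hξ, rfl⟩
    exact ⟨ξ, hg0t_le hξ, rfl⟩
  constructor
  · -- forward direction
    intro hne
    set v := ⁅ξ₁, x⁆ with hv_def
    have hv1 : v ∈ gr 1 := by simpa using gr_bracket 0 1 ξ₁ x hξ₁0 hx
    -- v ∉ small
    have hvnot : v ∉ bracketSpan g0t x := by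
      intro hv
      apply hne
      refine le_antisymm small_le_big (Submodule.span_le.mpr ?_)
      rintro z ⟨ξ, hξ0, rfl⟩
      have hmem : ξ - (B h ξ) • ξ₁ ∈ g0t := by
        rw [hg0t]
        refine ⟨Submodule.sub_mem _ hξ0 (Submodule.smul_mem _ _ hξ₁0), ?_⟩
        rw [map_sub, map_smul, hξ₁1, smul_eq_mul, mul_one, sub_self]
      have hdec : ⁅ξ, x⁆ = ⁅ξ - (B h ξ) • ξ₁, x⁆ + (B h ξ) • v := by
        rw [sub_lie, smul_lie, hv_def]; abel
      rw [hdec]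
      exact Submodule.add_mem _ (Submodule.subset_span ⟨_, hmem, rfl⟩)
        (Submodule.smul_mem _ _ hv)
    -- the pairing gr (-1) → Dual (gr 1)
    have : FiniteDimensional ℂ g := inferInstance
    set p : ↥(gr (-1)) →ₗ[ℂ] Module.Dual ℂ ↥(gr 1) :=
      ((gr 1).subtype.dualMap).comp (LinearMap.comp B ((gr (-1)).subtype)) with hp_def
    have hp_apply : ∀ (y : ↥(gr (-1))) (u : ↥(gr 1)), p y u = B (y : g) (u : g) := by
      intro y u; rfl
    have hp_inj : Function.Injective p := by
      rw [← LinearMap.ker_eq_bot]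
      rw [LinearMap.ker_eq_bot']
      intro y hy
      have : (y : g) = 0 := by
        refine nd_gr (-1) (y : g) y.2 (fun ξ hξ => ?_)
        rw [Bsymm]
        have := congrFun (congrArg DFunLike.coe hy) ⟨ξ, by simpa using hξ⟩
        simpa [hp_apply] using this
      exact Subtype.ext this
    set q : ↥(gr 1) →ₗ[ℂ] Module.Dual ℂ ↥(gr (-1)) :=
      ((gr (-1)).subtype.dualMap).comp (LinearMap.comp B ((gr 1).subtype)) with hq_def
    have hq_inj : Function.Injective q := by
      rw [← LinearMap.ker_eq_bot, LinearMap.ker_eq_bot']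
      intro u hu
      have : (u : g) = 0 := by
        refine nd_gr 1 (u : g) u.2 (fun ξ hξ => ?_)
        rw [Bsymm]
        have := congrFun (congrArg DFunLike.coe hu) ⟨ξ, hξ⟩
        simpa [hq_def] using this
      exact Subtype.ext this
    have hfr : Module.finrank ℂ ↥(gr (-1)) = Module.finrank ℂ (Module.Dual ℂ ↥(gr 1)) := by
      have e1 := LinearMap.finrank_le_finrank_of_injective hp_inj
      have e2 := LinearMap.finrank_le_finrank_of_injective hq_inj
      rw [Subspace.dual_finrank_eq] at e1 e2
      rw [Subspace.dual_finrank_eq]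
      omega
    have hp_surj : Function.Surjective p :=
      (LinearMap.injective_iff_surjective_of_finrank_eq_finrank hfr).mp hp_inj
    -- a functional vanishing on small, nonzero on v
    set U' : Submodule ℂ ↥(gr 1) := (bracketSpan g0t x).comap (gr 1).subtype with hU'_def
    set v1 : ↥(gr 1) := ⟨v, hv1⟩ with hv1_def
    have hπv : U'.mkQ v1 ≠ 0 := by
      rw [Submodule.mkQ_apply, ne_eq, Submodule.Quotient.mk_eq_zero]
      simpa [hU'_def, Submodule.mem_comap] using hvnot
    obtain ⟨f₀, hf₀⟩ : ∃ f₀ : Module.Dual ℂ (↥(gr 1) ⧸ U'), f₀ (U'.mkQ v1) ≠ 0 := by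
      by_contra hc
      push_neg at hc
      exact hπv ((Module.forall_dual_apply_eq_zero_iff ℂ _).mp hc)
    obtain ⟨y, hy⟩ := hp_surj (f₀.comp U'.mkQ)
    set y0 : g := (y : g) with hy0_def
    have hy0 : y0 ∈ gr (-1) := y.2
    have hyu : ∀ u, u ∈ bracketSpan g0t x → B y0 u = 0 := by
      intro u hu
      have hu1 : u ∈ gr 1 := span_le_gr1 g0t hg0t_le hu
      have : p y ⟨u, hu1⟩ = 0 := by
        rw [hy]
        have : (⟨u, hu1⟩ : ↥(gr 1)) ∈ U' := by simpa [hU'_def, Submodule.mem_comap] using hu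
        simp [LinearMap.comp_apply, Submodule.mkQ_apply,
          (Submodule.Quotient.mk_eq_zero U').mpr this]
      rw [← hp_apply y ⟨u, hu1⟩]
      exact this
    have hyv : B y0 v ≠ 0 := by
      have e : p y v1 = f₀ (U'.mkQ v1) := by rw [hy]; rfl
      have e2 : B y0 v = f₀ (U'.mkQ v1) := by rw [← e]; rfl
      rw [e2]
      exact hf₀
    -- z = [x, y0] is a nonzero multiple of h
    set z : g := ⁅x, y0⁆ with hz_def
    have hz0 : z ∈ gr 0 := by simpa using gr_bracket 1 (-1) x y0 hx hy0
    have hperp : ∀ ξ ∈ g0t, B ξ z = 0 := by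
      intro ξ hξ
      rw [hz_def, ← Binv, Bsymm]
      exact hyu ⁅ξ, x⁆ (Submodule.subset_span ⟨ξ, hξ, rfl⟩)
    set c : ℂ := B ξ₁ z with hc_def
    have hc : c ≠ 0 := by
      rw [hc_def, hz_def, ← Binv, Bsymm]
      exact hyv
    have hzch : z = c • h := by
      have ht'0 : z - c • h ∈ gr 0 :=
        Submodule.sub_mem _ hz0 (Submodule.smul_mem _ _ hgr0h)
      have key : ∀ ξ ∈ gr 0, B ξ (z - c • h) = 0 := by
        intro ξ hξ
        have hmem : ξ - (B h ξ) • ξ₁ ∈ g0t := by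
          rw [hg0t]
          refine ⟨Submodule.sub_mem _ hξ (Submodule.smul_mem _ _ hξ₁0), ?_⟩
          rw [map_sub, map_smul, hξ₁1, smul_eq_mul, mul_one, sub_self]
        have A' := hperp _ hmem
        simp only [map_sub, map_smul, LinearMap.sub_apply, LinearMap.smul_apply,
          smul_eq_mul] at A'
        have A'' := ((hg0t _).mp hmem).2
        simp only [map_sub, map_smul, smul_eq_mul, hξ₁1, mul_one] at A''
        have expand : B ξ (z - c • h) = B ξ z - c * B ξ h := by
          rw [map_sub, map_smul, smul_eq_mul]
        rw [expand, Bsymm ξ h]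
        linear_combination A' - (B h ξ) * hc_def + c * A''
      have := nd_gr 0 (z - c • h) ht'0 (fun ξ hξ => key ξ (by simpa using hξ))
      exact sub_eq_zero.mp this
    -- construct the sl₂-triple
    refine ⟨(2 / c) • y0, Submodule.smul_mem _ _ hy0, ?_, ?_, ?_⟩
    · have hx1 : ⁅h, x⁆ = x := by
        have := (mem_gr 1 x).mp hx
        simpa using this
      rw [smul_lie, hx1]
    · have hym : ⁅h, y0⁆ = -y0 := by
        have := (mem_gr (-1) y0).mp hy0
        simpa using this
      rw [lie_smul, smul_lie, hym]
      module
    · rw [lie_smul, ← hz_def, hzch, smul_smul, div_mul_cancel₀]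
      exact hc
  · -- converse direction
    rintro ⟨y, hy, _, _, hxy⟩ heq
    have hfun : ∀ u ∈ bracketSpan g0t x, B u y = 0 := by
      intro u hu
      refine Submodule.span_induction (p := fun u _ => B u y = 0) ?_ ?_ ?_ ?_ hu
      · rintro z ⟨ξ, hξ, rfl⟩
        rw [Binv, hxy, map_smul, smul_eq_mul, Bsymm]
        rw [((hg0t ξ).mp hξ).2, mul_zero]
      · simp
      · intro a b _ _ ha hb
        rw [map_add, LinearMap.add_apply, ha, hb, add_zero]
      · intro a m _ hm
        rw [map_smul, LinearMap.smul_apply, hm, smul_zero]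
    have hv_mem : ⁅ξ₁, x⁆ ∈ bracketSpan g0t x := by
      rw [heq]; exact Submodule.subset_span ⟨ξ₁, hξ₁0, rfl⟩
    have := hfun _ hv_mem
    rw [Binv, hxy, map_smul, smul_eq_mul, Bsymm, hξ₁1, mul_one] at this
    norm_num at this
end

section
/- In the graded setting below, suppose x ∈ 𝔤_1 and 2h is a Dynkin characteristic of x, i.e., there exists y ∈ 𝔤_{−1} such that (2h, x, y) is an sl₂-triple. Then [𝔤_0, x] = 𝔤_1, but [𝔤̃_0, x] ≠ 𝔤_1. (Lemma 2.8 of the paper.) -/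
/-- Lemma 2.8: in the ℤ-graded setting, if `2h` is a Dynkin characteristic of `x ∈ 𝔤₁`, then
`[𝔤₀, x] = 𝔤₁` but `[𝔤̃₀, x] ≠ 𝔤₁`. -/
theorem stmt1 {g : Type*} [LieRing g] [LieAlgebra ℂ g] [Module.Finite ℂ g]
    (h : g) (hh : h ≠ 0)
    -- `gr i` is the `i`-eigenspace of `ad h`
    (gr : ℤ → Submodule ℂ g)
    (hgr : ∀ i : ℤ, gr i = Module.End.eigenspace (LieAlgebra.ad ℂ g h) (i : ℂ))
    -- `ad h` is diagonalizable with integer eigenvalues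
    (hdiag : ⨆ i : ℤ, gr i = ⊤)
    -- `B` is a nondegenerate symmetric invariant bilinear form on `g`
    (B : LinearMap.BilinForm ℂ g)
    (hsymm : ∀ x y, B x y = B y x)
    (hinv : ∀ x y z, B ⁅x, y⁆ z = B x ⁅y, z⁆)
    (hnd : ∀ x, (∀ y, B x y = 0) → x = 0)
    -- `g0t` is the orthogonal complement of `h` in `𝔤₀`
    (g0t : Submodule ℂ g)
    (hg0t : ∀ ξ, ξ ∈ g0t ↔ ξ ∈ gr 0 ∧ B h ξ = 0)
    (x : g) (hx : x ∈ gr 1)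
    -- `2h` is a Dynkin characteristic of `x`
    (hchar : ∃ y ∈ gr (-1), IsSl2Triple' ((2 : ℂ) • h) x y) :
    bracketSpan (gr 0) x = gr 1 ∧ bracketSpan g0t x ≠ gr 1 := by
  classical
  obtain ⟨y, hy, ⟨-, -, hxy⟩⟩ := hchar
  -- membership in `gr i` in terms of brackets
  have memgr : ∀ (i : ℤ) (ξ : g), ξ ∈ gr i ↔ ⁅h, ξ⁆ = (i : ℂ) • ξ := by
    intro i ξ
    rw [hgr i, Module.End.mem_eigenspace_iff, LieAlgebra.ad_apply]
  -- bracket of graded pieces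
  have grlie : ∀ (i j : ℤ) (ξ v : g), ξ ∈ gr i → v ∈ gr j → ⁅ξ, v⁆ ∈ gr (i + j) := by
    intro i j ξ v hξ hv
    rw [memgr] at hξ hv ⊢
    rw [leibniz_lie, hξ, hv, smul_lie, lie_smul, ← add_smul]
    push_cast
    ring_nf
  -- orthogonality of graded pieces
  have Borth : ∀ (i j : ℤ), i + j ≠ 0 → ∀ ξ v : g, ξ ∈ gr i → v ∈ gr j → B ξ v = 0 := by
    intro i j hij ξ v hξ hv
    rw [memgr] at hξ hv
    have e1 : B ⁅h, ξ⁆ v = B ξ ⁅v, h⁆ := by rw [hinv, hsymm, hinv]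
    have hvh : ⁅v, h⁆ = -⁅h, v⁆ := neg_eq_iff_eq_neg.1 (lie_skew h v)
    rw [hξ, hvh, hv] at e1
    have e2 : ((i : ℂ) + (j : ℂ)) * B ξ v = 0 := by
      simp only [map_smul, LinearMap.map_smul₂, map_neg, LinearMap.smul_apply, smul_eq_mul] at e1
      linear_combination e1
    have hij' : ((i : ℂ) + (j : ℂ)) ≠ 0 := by
      intro hc
      apply hij
      have : ((i + j : ℤ) : ℂ) = 0 := by push_cast; exact hc
      exact_mod_cast this
    exact (mul_eq_zero.1 e2).resolve_left hij'
  -- a vector orthogonal to every graded piece is orthogonal to everything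
  have Ball : ∀ u : g, (∀ (i : ℤ) (z : g), z ∈ gr i → B u z = 0) → ∀ z, B u z = 0 := by
    intro u hu z
    have hker : (⊤ : Submodule ℂ g) ≤ LinearMap.ker (B u) := by
      rw [← hdiag]
      exact iSup_le fun i w hw => LinearMap.mem_ker.2 (hu i w hw)
    exact LinearMap.mem_ker.1 (hker Submodule.mem_top)
  -- nondegeneracy of the pairing `gr i × gr (-i)`
  have ndpiece : ∀ (i : ℤ) (u : g), u ∈ gr i → (∀ z ∈ gr (-i), B u z = 0) → u = 0 := by
    intro i u hu h0
    apply hnd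
    apply Ball
    intro j z hz
    by_cases hji : j = -i
    · exact h0 z (hji ▸ hz)
    · exact Borth i j (fun hc => hji (by omega)) u z hu hz
  -- injectivity of `ad x` on `gr (-1)`
  have injx : ∀ z : g, z ∈ gr (-1) → ⁅x, z⁆ = 0 → z = 0 := by
    intro z hz hxz
    set w : ℕ → g := fun k => ((LieAlgebra.ad ℂ g y) ^ k) z with hwdef
    have hw0 : w 0 = z := rfl
    have hwsucc : ∀ k, w (k + 1) = ⁅y, w k⁆ := by
      intro k
      simp only [hwdef, pow_succ', Module.End.mul_apply, LieAlgebra.ad_apply]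
    have hwmem : ∀ k : ℕ, w k ∈ gr (-(1 + (k : ℤ))) := by
      intro k
      induction k with
      | zero => simpa [hw0] using hz
      | succ n ih =>
        have hmem := grlie (-1) (-(1 + (n : ℤ))) y (w n) hy ih
        rw [hwsucc n]
        have harith : (-1 : ℤ) + -(1 + (n : ℤ)) = -(1 + ((n + 1 : ℕ) : ℤ)) := by push_cast; ring
        rwa [harith] at hmem
    have hkey : ∀ k : ℕ, ⁅x, w (k + 1)⁆ = (-((k : ℂ) + 1) * ((k : ℂ) + 2)) • w k := by
      intro k
      induction k with
      | zero =>
        rw [hwsucc 0, hw0, leibniz_lie, hxy, hxz, lie_zero, add_zero, smul_lie,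
          (memgr (-1) z).1 hz, smul_smul]
        congr 1
        push_cast
        ring
      | succ n ih =>
        rw [hwsucc (n + 1), leibniz_lie, hxy, ih, lie_smul, ← hwsucc n, smul_lie,
          (memgr _ _).1 (hwmem (n + 1))]
        rw [smul_smul, ← add_smul]
        congr 1
        push_cast
        ring
    have hvanish : ∃ M, w M = 0 := by
      by_contra hc
      push_neg at hc
      have hli : LinearIndependent ℂ w := by
        apply Module.End.eigenvectors_linearIndependent' (LieAlgebra.ad ℂ g h)
          (fun k : ℕ => ((-(1 + (k : ℤ)) : ℤ) : ℂ))
        · intro a b hab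
          have hab' : ((-(1 + (a : ℤ)) : ℤ) : ℂ) = ((-(1 + (b : ℤ)) : ℤ) : ℂ) := hab
          have : -(1 + (a : ℤ)) = -(1 + (b : ℤ)) := by exact_mod_cast hab'
          omega
        · intro k
          refine ⟨?_, hc k⟩
          show w k ∈ Module.End.eigenspace (LieAlgebra.ad ℂ g h) ((-(1 + (k : ℤ)) : ℤ) : ℂ)
          rw [← hgr]
          exact hwmem k
      haveI : Finite ℕ := hli.finite
      exact not_finite ℕ
    have hdesc : ∀ k : ℕ, w k = 0 → z = 0 := by
      intro k
      induction k with
      | zero => intro h0; rwa [hw0] at h0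
      | succ n ih =>
        intro h0
        apply ih
        have := hkey n
        rw [h0, lie_zero] at this
        have hcoef : (-((n : ℂ) + 1) * ((n : ℂ) + 2)) ≠ 0 := by
          apply mul_ne_zero
          · refine neg_ne_zero.2 ?_
            have h1 : ((n : ℂ) + 1) = ((n + 1 : ℕ) : ℂ) := by push_cast; ring
            rw [h1]
            exact Nat.cast_ne_zero.2 (by omega)
          · have h2 : ((n : ℂ) + 2) = ((n + 2 : ℕ) : ℂ) := by push_cast; ring
            rw [h2]
            exact Nat.cast_ne_zero.2 (by omega)
        exact (smul_eq_zero.1 this.symm).resolve_left hcoef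
    obtain ⟨M, hM⟩ := hvanish
    exact hdesc M hM
  -- the first claim
  have hWle : bracketSpan (gr 0) x ≤ gr 1 := by
    rw [bracketSpan, Submodule.span_le]
    rintro _ ⟨ξ, hξ, rfl⟩
    simpa using grlie 0 1 ξ x hξ hx
  have hannW : ∀ z : g, z ∈ gr (-1) →
      (∀ u, u ∈ bracketSpan (gr 0) x → B u z = 0) → z = 0 := by
    intro z hz hB
    have hxz : ⁅x, z⁆ ∈ gr 0 := by simpa using grlie 1 (-1) x z hx hz
    have h0 : ⁅x, z⁆ = 0 := by
      apply ndpiece 0 _ hxz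
      intro ξ hξ
      have hξ0 : ξ ∈ gr 0 := by simpa using hξ
      have := hB ⁅ξ, x⁆ (Submodule.subset_span ⟨ξ, hξ0, rfl⟩)
      rw [hinv] at this
      rw [hsymm]
      exact this
    exact injx z hz h0
  have part1 : bracketSpan (gr 0) x = gr 1 := by
    have fd : FiniteDimensional ℂ g := inferInstance
    -- map `gr (-1) → (bracketSpan (gr 0) x)*`
    set W := bracketSpan (gr 0) x with hW
    let D1 : ↥(gr (-1)) →ₗ[ℂ] Module.Dual ℂ ↥W :=
      W.subtype.dualMap ∘ₗ B.flip ∘ₗ (gr (-1)).subtype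
    have hD1 : Function.Injective D1 := by
      rw [← LinearMap.ker_eq_bot]
      apply (Submodule.eq_bot_iff _).2
      rintro ⟨z, hz⟩ hker
      have hz0 : z = 0 := by
        apply hannW z hz
        intro u hu
        have : D1 ⟨z, hz⟩ ⟨u, hu⟩ = 0 := by
          rw [LinearMap.mem_ker.1 hker]; rfl
        simpa [D1] using this
      simpa using hz0
    let D2 : ↥(gr 1) →ₗ[ℂ] Module.Dual ℂ ↥(gr (-1)) :=
      (gr (-1)).subtype.dualMap ∘ₗ B ∘ₗ (gr 1).subtype
    have hD2 : Function.Injective D2 := by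
      rw [← LinearMap.ker_eq_bot]
      apply (Submodule.eq_bot_iff _).2
      rintro ⟨u, hu⟩ hker
      have hu0 : u = 0 := by
        apply ndpiece 1 u hu
        intro z hz
        have : D2 ⟨u, hu⟩ ⟨z, hz⟩ = 0 := by
          rw [LinearMap.mem_ker.1 hker]; rfl
        simpa [D2] using this
      simpa using hu0
    have e1 : Module.finrank ℂ ↥(gr (-1)) ≤ Module.finrank ℂ ↥W := by
      have := LinearMap.finrank_le_finrank_of_injective hD1
      rwa [Subspace.dual_finrank_eq] at this
    have e2 : Module.finrank ℂ ↥(gr 1) ≤ Module.finrank ℂ ↥(gr (-1)) := by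
      have := LinearMap.finrank_le_finrank_of_injective hD2
      rwa [Subspace.dual_finrank_eq] at this
    exact Submodule.eq_of_le_of_finrank_le hWle (le_trans e2 e1)
  refine ⟨part1, ?_⟩
  -- the second claim
  intro heq
  have hle : bracketSpan g0t x ≤ LinearMap.ker (B.flip y) := by
    rw [bracketSpan, Submodule.span_le]
    rintro _ ⟨ξ, hξ, rfl⟩
    simp only [SetLike.mem_coe, LinearMap.mem_ker]
    show B ⁅ξ, x⁆ y = 0
    rw [hinv, hxy, map_smul, smul_eq_mul, hsymm ξ h, ((hg0t ξ).1 hξ).2, mul_zero]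
  have hyz : ∀ z : g, B y z = 0 := by
    apply Ball
    intro i z hz
    by_cases hi : i = 1
    · subst hi
      rw [← heq] at hz
      have hzy : B z y = 0 := LinearMap.mem_ker.1 (hle hz)
      rw [hsymm]
      exact hzy
    · exact Borth (-1) i (by omega) y z hy hz
  have hy0 : y = 0 := hnd y hyz
  rw [hy0, lie_zero] at hxy
  have : h = 0 := by
    have h2 := hxy.symm
    rw [smul_eq_zero] at h2
    exact h2.resolve_left (by norm_num)
  exact hh this
end

section
/- In the graded setting below, assume in addition B(h,h) ≠ 0, and let x ∈ 𝔤_1. Then [𝔤̃_0, x] = [𝔤_0, x] if and only if x ∈ [𝔤̃_0, x]. (This is the infinitesimal content of Lemma 2.6 of the paper: the tangent spaces [𝔤̃_0,x] and [𝔤_0,x] coincide exactly when the line ℂx is contained in [𝔤̃_0,x], i.e., when the orbit of x under the reduced group is conical.) -/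
/-- Lemma 2.6 (infinitesimal form): in the ℤ-graded setting with `B (h, h) ≠ 0`, for `x ∈ 𝔤₁`
the tangent spaces `[𝔤̃₀, x]` and `[𝔤₀, x]` coincide exactly when `x ∈ [𝔤̃₀, x]`. -/
theorem stmt2 {g : Type*} [LieRing g] [LieAlgebra ℂ g] [Module.Finite ℂ g]
    (h : g) (hh : h ≠ 0)
    -- `gr i` is the `i`-eigenspace of `ad h`
    (gr : ℤ → Submodule ℂ g)
    (hgr : ∀ i : ℤ, gr i = Module.End.eigenspace (LieAlgebra.ad ℂ g h) (i : ℂ))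
    -- `ad h` is diagonalizable with integer eigenvalues
    (hdiag : ⨆ i : ℤ, gr i = ⊤)
    -- `B` is a nondegenerate symmetric invariant bilinear form on `g`
    (B : LinearMap.BilinForm ℂ g)
    (hsymm : ∀ x y, B x y = B y x)
    (hinv : ∀ x y z, B ⁅x, y⁆ z = B x ⁅y, z⁆)
    (hnd : ∀ x, (∀ y, B x y = 0) → x = 0)
    (hBh : B h h ≠ 0)
    -- `g0t` is the orthogonal complement of `h` in `𝔤₀`
    (g0t : Submodule ℂ g)
    (hg0t : ∀ ξ, ξ ∈ g0t ↔ ξ ∈ gr 0 ∧ B h ξ = 0)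
    (x : g) (hx : x ∈ gr 1) :
    bracketSpan g0t x = bracketSpan (gr 0) x ↔ x ∈ bracketSpan g0t x := by
  -- ⁅h, x⁆ = x since x is in the 1-eigenspace of ad h
  have hhx : ⁅h, x⁆ = x := by
    rw [hgr 1] at hx
    have := (Module.End.mem_eigenspace_iff).mp hx
    simpa using this
  -- h ∈ gr 0
  have hh0 : h ∈ gr 0 := by
    rw [hgr 0]
    rw [Module.End.mem_eigenspace_iff]
    simp [LieAlgebra.ad_apply]
  -- g0t ⊆ gr 0
  have hsub : bracketSpan g0t x ≤ bracketSpan (gr 0) x := by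
    apply Submodule.span_mono
    rintro z ⟨ξ, hξ, rfl⟩
    exact ⟨ξ, ((hg0t ξ).mp hξ).1, rfl⟩
  constructor
  · intro heq
    -- x = ⁅h, x⁆ ∈ bracketSpan (gr 0) x = bracketSpan g0t x
    rw [heq]
    exact Submodule.subset_span ⟨h, hh0, hhx.symm⟩
  · intro hxmem
    apply le_antisymm hsub
    rw [bracketSpan, Submodule.span_le]
    rintro z ⟨ξ, hξ, rfl⟩
    -- decompose ξ = c • h + ξ' with ξ' ∈ g0t, c = B h ξ / B h h
    set c : ℂ := B h ξ / B h h with hc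
    have hξ' : ξ - c • h ∈ g0t := by
      rw [hg0t]
      constructor
      · exact Submodule.sub_mem _ hξ (Submodule.smul_mem _ _ hh0)
      · simp only [map_sub, map_smul, smul_eq_mul, hc]
        field_simp
        ring
    have : ⁅ξ, x⁆ = ⁅ξ - c • h, x⁆ + c • x := by
      rw [sub_lie, smul_lie, hhx]; abel
    rw [this]
    exact Submodule.add_mem _
      (Submodule.subset_span ⟨ξ - c • h, hξ', rfl⟩)
      (Submodule.smul_mem _ _ hxmem)
end

section
/- In the graded setting below, let x ∈ 𝔤_1 and suppose that ĥ = a·h + h_0 is a Dynkin characteristic of x, where a ∈ ℂ and h_0 ∈ 𝔤̃_0. Then either x ∈ [𝔤̃_0, x], or a = 2, [h_0, x] = 0, and B(h_0, h_0) = 0. (This is the key intermediate claim in the proof of Theorem 2.9 of the paper.) -/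
/-- Key claim in the proof of Theorem 2.9: if `ĥ = a • h + h₀` with `h₀ ∈ 𝔤̃₀` is a Dynkin
characteristic of `x ∈ 𝔤₁`, then either `x ∈ [𝔤̃₀, x]`, or `a = 2`, `[h₀, x] = 0` and
`B (h₀, h₀) = 0`. -/
theorem stmt3 {g : Type*} [LieRing g] [LieAlgebra ℂ g] [Module.Finite ℂ g]
    (h : g) (hh : h ≠ 0)
    -- `gr i` is the `i`-eigenspace of `ad h`
    (gr : ℤ → Submodule ℂ g)
    (hgr : ∀ i : ℤ, gr i = Module.End.eigenspace (LieAlgebra.ad ℂ g h) (i : ℂ))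
    -- `ad h` is diagonalizable with integer eigenvalues
    (hdiag : ⨆ i : ℤ, gr i = ⊤)
    -- `B` is a nondegenerate symmetric invariant bilinear form on `g`
    (B : LinearMap.BilinForm ℂ g)
    (hsymm : ∀ x y, B x y = B y x)
    (hinv : ∀ x y z, B ⁅x, y⁆ z = B x ⁅y, z⁆)
    (hnd : ∀ x, (∀ y, B x y = 0) → x = 0)
    -- `g0t` is the orthogonal complement of `h` in `𝔤₀`
    (g0t : Submodule ℂ g)
    (hg0t : ∀ ξ, ξ ∈ g0t ↔ ξ ∈ gr 0 ∧ B h ξ = 0)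
    (x : g) (hx : x ∈ gr 1)
    (a : ℂ) (h0 : g) (hh0 : h0 ∈ g0t)
    -- `ĥ = a • h + h₀` is a Dynkin characteristic of `x`
    (hchar : ∃ y ∈ gr (-1), IsSl2Triple' (a • h + h0) x y) :
    x ∈ bracketSpan g0t x ∨ (a = 2 ∧ ⁅h0, x⁆ = 0 ∧ B h0 h0 = 0) := by
  obtain ⟨y, hy, h1, h2, h3⟩ := hchar
  have hhx : ⁅h, x⁆ = x := by
    have := hx
    rw [hgr 1, Module.End.mem_eigenspace_iff] at this
    simpa using this
  have key : ⁅h0, x⁆ = (2 - a) • x := by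
    have e : a • ⁅h, x⁆ + ⁅h0, x⁆ = (2 : ℂ) • x := by
      rw [← h1, add_lie, smul_lie]
    rw [hhx] at e
    have : ⁅h0, x⁆ = (2 : ℂ) • x - a • x := by
      rw [← e]; abel
    rw [this, sub_smul]
  by_cases ha : a = 2
  · right
    have hbx : ⁅h0, x⁆ = 0 := by rw [key, ha]; simp
    refine ⟨ha, hbx, ?_⟩
    have hB : B h h0 = 0 := ((hg0t h0).mp hh0).2
    have e1 : B ⁅h0, x⁆ y = B h0 ⁅x, y⁆ := hinv h0 x y
    rw [hbx, h3] at e1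
    simp only [map_add, map_smul, map_zero, LinearMap.zero_apply] at e1
    rw [hsymm h0 h] at e1
    rw [hB] at e1
    simpa using e1.symm
  · left
    have hne : (2 : ℂ) - a ≠ 0 := sub_ne_zero.mpr (Ne.symm ha)
    have hx' : x = ⁅((2 : ℂ) - a)⁻¹ • h0, x⁆ := by
      rw [smul_lie, key, smul_smul, inv_mul_cancel₀ hne, one_smul]
    have hmem : ⁅((2 : ℂ) - a)⁻¹ • h0, x⁆ ∈ bracketSpan g0t x :=
      Submodule.subset_span ⟨_, g0t.smul_mem _ hh0, rfl⟩
    rwa [← hx'] at hmem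
end
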